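/- For all compact pmm spaces 𝒳 = (X, o_X, μ_X) and 𝒴 = (Y, o_Y, μ_Y), the infimum in the definition of the Gromov-Hausdorff-Prokhorov distance dc(𝒳,𝒴) is attained: there exist a metric space Z and isometric embeddings f : X → Z and g : Y → Z with max(d(f(o_X), g(o_Y)), dH(f(X), g(Y)), dP(f_*μ_X, g_*μ_Y)) = dc(𝒳,𝒴). -/

import Mathlib

open MeasureTheory Topology Filter

noncomputable section

/-- Prokhorov distance between finite Borel measures on a metric space. -/
def prokhorovDist {Z : Type*} [MetricSpace Z] [MeasurableSpace Z]
    (μ ν : Measure Z) : ℝ :=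
  sInf {ε : ℝ | 0 < ε ∧ ∀ A : Set Z, IsClosed A →
    μ A ≤ ν (Metric.cthickening ε A) + ENNReal.ofReal ε ∧
    ν A ≤ μ (Metric.cthickening ε A) + ENNReal.ofReal ε}

/-- A pointed measured metric space: a metric space with a distinguished point and a Borel
measure. -/
structure PMM : Type 1 where
  carrier : Type
  metric : MetricSpace carrier
  basepoint : carrier
  meas : @Measure carrier
    (@borel carrier metric.toPseudoMetricSpace.toUniformSpace.toTopologicalSpace)

attribute [instance] PMM.metric

instance PMM.instMeasurableSpace (𝒳 : PMM) : MeasurableSpace 𝒳.carrier := borel 𝒳.carrier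

instance PMM.instBorelSpace (𝒳 : PMM) : BorelSpace 𝒳.carrier := ⟨rfl⟩

/-- A pmm space is boundedly compact if every closed ball is compact and has finite measure. -/
def PMM.BoundedlyCompact (𝒳 : PMM) : Prop :=
  (∀ (x : 𝒳.carrier) (r : ℝ), IsCompact (Metric.closedBall x r)) ∧
  (∀ (x : 𝒳.carrier) (r : ℝ), 𝒳.meas (Metric.closedBall x r) ≠ ⊤)

/-- A pmm space is compact if its carrier is compact and its measure is finite. -/
def PMM.IsCompactPMM (𝒳 : PMM) : Prop :=
  CompactSpace 𝒳.carrier ∧ 𝒳.meas Set.univ ≠ ⊤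

/-- A pair of maps of two pmm spaces into a common metric space. -/
structure GHPEmbedding (𝒳 𝒴 : PMM) : Type 1 where
  Z : Type
  mZ : MetricSpace Z
  f : 𝒳.carrier → Z
  g : 𝒴.carrier → Z

attribute [instance] GHPEmbedding.mZ

/-- Both maps of a `GHPEmbedding` are isometric embeddings. -/
def GHPEmbedding.IsIsometric {𝒳 𝒴 : PMM} (e : GHPEmbedding 𝒳 𝒴) : Prop :=
  Isometry e.f ∧ Isometry e.g

/-- The quantity `max(d(f o_X, g o_Y), dH(f(X), g(Y)), dP(f_*μ_X, g_*μ_Y))` associated to a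
pair of embeddings into a common space. -/
def GHPEmbedding.value {𝒳 𝒴 : PMM} (e : GHPEmbedding 𝒳 𝒴) : ℝ :=
  letI : MeasurableSpace e.Z := borel e.Z
  max (dist (e.f 𝒳.basepoint) (e.g 𝒴.basepoint))
    (max (Metric.hausdorffDist (Set.range e.f) (Set.range e.g))
      (prokhorovDist (𝒳.meas.map e.f) (𝒴.meas.map e.g)))

/-- The Gromov-Hausdorff-Prokhorov distance of compact pmm spaces. -/
def cGHP (𝒳 𝒴 : PMM) : ℝ :=
  sInf {x : ℝ | ∃ e : GHPEmbedding 𝒳 𝒴, e.IsIsometric ∧ x = e.value}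

/-- A pmm-subspace of a pmm space `𝒳`: a subset containing the basepoint together with a
measure `≤ 𝒳.meas` supported on the subset. -/
structure SubPMM (𝒳 : PMM) where
  set : Set 𝒳.carrier
  root_mem : 𝒳.basepoint ∈ set
  meas : Measure 𝒳.carrier
  meas_le : meas ≤ 𝒳.meas
  supported : meas setᶜ = 0

/-- The pmm space associated to a pmm-subspace. -/
def SubPMM.toPMM {𝒳 : PMM} (S : SubPMM 𝒳) : PMM where
  carrier := ↥S.set
  metric := inferInstance
  basepoint := ⟨𝒳.basepoint, S.root_mem⟩
  meas := @Measure.comap ↥S.set 𝒳.carrier (borel ↥S.set) inferInstance Subtype.val S.meas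

/-- The pmm-subspace ordering: inclusion of sets and inequality of measures. -/
instance {𝒳 : PMM} : LE (SubPMM 𝒳) :=
  ⟨fun S T => S.set ⊆ T.set ∧ S.meas ≤ T.meas⟩

/-- Compactness of a pmm-subspace. -/
def SubPMM.IsCompactSub {𝒳 : PMM} (S : SubPMM 𝒳) : Prop :=
  IsCompact S.set ∧ S.meas Set.univ ≠ ⊤

/-- The closed ball of radius `r` around the basepoint, as a pmm-subspace (for `r ≥ 0` the
underlying set is exactly the closed ball; the basepoint is inserted so that the definition
makes sense for all `r`). -/
def PMM.ballSub (𝒳 : PMM) (r : ℝ) : SubPMM 𝒳 where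
  set := insert 𝒳.basepoint (Metric.closedBall 𝒳.basepoint r)
  root_mem := Set.mem_insert _ _
  meas := 𝒳.meas.restrict (insert 𝒳.basepoint (Metric.closedBall 𝒳.basepoint r))
  meas_le := Measure.restrict_le_self
  supported := by
    rw [Measure.restrict_apply ((measurableSet_closedBall.insert 𝒳.basepoint).compl),
      Set.compl_inter_self]
    simp

/-- The quantity `a(ε, r; 𝒳, 𝒴)`. -/
def aFun (ε r : ℝ) (𝒳 𝒴 : PMM) : ℝ :=
  sInf {x : ℝ | ∃ Y' : SubPMM 𝒴, Y'.IsCompactSub ∧ 𝒴.ballSub (r - ε) ≤ Y' ∧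
    x = cGHP ((𝒳.ballSub r).toPMM) Y'.toPMM}

/-- The quantity `a_ε(𝒳, 𝒴) = a(ε, 1/ε; 𝒳, 𝒴)`. -/
def aEps (ε : ℝ) (𝒳 𝒴 : PMM) : ℝ := aFun ε (1 / ε) 𝒳 𝒴

/-- The Gromov-Hausdorff-Prokhorov distance of boundedly compact pmm spaces
(with `inf ∅ = 1`). -/
def GHP (𝒳 𝒴 : PMM) : ℝ :=
  sInf (insert 1 {ε : ℝ | ε ∈ Set.Ioc (0 : ℝ) 1 ∧ max (aEps ε 𝒳 𝒴) (aEps ε 𝒴 𝒳) < ε / 2})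

/-- Two pmm spaces are GHP-isometric if there is a root-preserving measure-preserving
surjective isometry between them. -/
def GHPIsometric (𝒳 𝒴 : PMM) : Prop :=
  ∃ ρ : 𝒳.carrier → 𝒴.carrier, Isometry ρ ∧ Function.Surjective ρ ∧
    ρ 𝒳.basepoint = 𝒴.basepoint ∧ 𝒳.meas.map ρ = 𝒴.meas

/-- `r` is a continuity radius of a pmm space. -/
def PMM.ContinuityRadius (𝒳 : PMM) (r : ℝ) : Prop :=
  0 < r ∧ Metric.closedBall 𝒳.basepoint r = closure (Metric.ball 𝒳.basepoint r) ∧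
    𝒳.meas (Metric.closedBall 𝒳.basepoint r \ Metric.ball 𝒳.basepoint r) = 0

/-!
For an isometric pair `f, g`, the quantity `value` only depends on the cross-distance
`δ (x, y) = dist (f x) (g y)`, and conversely every function `δ` that glues the metrics of `X`
and `Y` into a pseudometric on `X ⊕ Y` is realised by Kuratowski-type embeddings into bounded
functions on `X ⊕ Y`. Moving the cross-distances by at most `η` moves the basepoint distance,
the Hausdorff distance and the Prokhorov distance by at most `η`, so the value is 1-Lipschitz in
`δ` for the sup distance. Cross-distances are 2-Lipschitz, so those bounded by a constant form a
compact set by Arzelà–Ascoli, and a minimiser of the value on it attains the infimum.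
-/

open scoped BoundedContinuousFunction

open Metric Set

section Comparison

variable {α β Z Z' : Type*} [PseudoMetricSpace Z] [PseudoMetricSpace Z']
  {f : α → Z} {g : β → Z} {f' : α → Z'} {g' : β → Z'} {η : ℝ}

theorem infEDist_image_le_infEDist_image_add (hη : 0 ≤ η)
    (hc : ∀ x y, dist (f' x) (g' y) ≤ dist (f x) (g y) + η) (P : Set α) (y : β) :
    infEDist (g' y) (f' '' P) ≤ infEDist (g y) (f '' P) + ENNReal.ofReal η := by
  rw [← tsub_le_iff_right, le_infEDist]
  rintro _ ⟨x, hx, rfl⟩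
  rw [tsub_le_iff_right]
  calc infEDist (g' y) (f' '' P) ≤ edist (g' y) (f' x) :=
        infEDist_le_edist_of_mem (mem_image_of_mem f' hx)
    _ ≤ edist (g y) (f x) + ENNReal.ofReal η := by
        rw [edist_dist, edist_dist, ← ENNReal.ofReal_add dist_nonneg hη, dist_comm,
          dist_comm (g y)]
        exact ENNReal.ofReal_le_ofReal (hc x y)

theorem preimage_cthickening_image_subset {ε : ℝ} (hε : 0 ≤ ε) (hη : 0 ≤ η)
    (hc : ∀ x y, dist (f' x) (g' y) ≤ dist (f x) (g y) + η) (P : Set α) :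
    g ⁻¹' cthickening ε (f '' P) ⊆ g' ⁻¹' cthickening (ε + η) (f' '' P) := fun y hy => by
  rw [mem_preimage, mem_cthickening_iff, ENNReal.ofReal_add hε hη]
  exact (infEDist_image_le_infEDist_image_add hη hc P y).trans (by gcongr; exact hy)

theorem infEDist_range_le_hausdorffEDist_add (hη : 0 ≤ η)
    (hc : ∀ x y, dist (f' x) (g' y) ≤ dist (f x) (g y) + η) (y : β) :
    infEDist (g' y) (range f') ≤ hausdorffEDist (range g) (range f) + ENNReal.ofReal η := by
  calc infEDist (g' y) (range f') = infEDist (g' y) (f' '' univ) := by rw [image_univ]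
    _ ≤ infEDist (g y) (f '' univ) + ENNReal.ofReal η :=
        infEDist_image_le_infEDist_image_add hη hc univ y
    _ ≤ _ := by
        rw [image_univ]
        gcongr
        exact infEDist_le_hausdorffEDist_of_mem (mem_range_self y)

theorem hausdorffDist_range_le_of_dist_le [Nonempty α] [Nonempty β]
    (hf : Bornology.IsBounded (range f)) (hg : Bornology.IsBounded (range g)) (hη : 0 ≤ η)
    (hc : ∀ x y, dist (f' x) (g' y) ≤ dist (f x) (g y) + η) :
    hausdorffDist (range f') (range g') ≤ hausdorffDist (range f) (range g) + η := by
  have hc' : ∀ y x, dist (g' y) (f' x) ≤ dist (g y) (f x) + η := fun y x => by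
    simpa only [dist_comm] using hc x y
  have key : hausdorffEDist (range f') (range g') ≤
      hausdorffEDist (range f) (range g) + ENNReal.ofReal η := by
    refine hausdorffEDist_le_of_infEDist ?_ ?_
    · rintro _ ⟨x, rfl⟩
      exact infEDist_range_le_hausdorffEDist_add hη hc' x
    · rintro _ ⟨y, rfl⟩
      rw [hausdorffEDist_comm]
      exact infEDist_range_le_hausdorffEDist_add hη hc y
  have hfin : hausdorffEDist (range f) (range g) ≠ ⊤ :=
    hausdorffEDist_ne_top_of_nonempty_of_bounded (range_nonempty f) (range_nonempty g) hf hg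
  rw [hausdorffDist, hausdorffDist, ← ENNReal.toReal_ofReal hη,
    ← ENNReal.toReal_add hfin ENNReal.ofReal_ne_top]
  exact ENNReal.toReal_mono (by finiteness) key

end Comparison

section Prokhorov

variable {α β Z Z' : Type*} [MeasurableSpace α] [MeasurableSpace β]
  [MetricSpace Z] [MeasurableSpace Z] [BorelSpace Z]
  [MetricSpace Z'] [MeasurableSpace Z'] [BorelSpace Z']
  {f : α → Z} {g : β → Z} {f' : α → Z'} {g' : β → Z'} {ε η : ℝ}

theorem map_le_map_cthickening_add_of_dist_le (μ : Measure α) (ν : Measure β)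
    (hf : Measurable f) (hg : Measurable g) (hf' : Measurable f') (hg' : Measurable g')
    (hε : 0 ≤ ε) (hη : 0 ≤ η) (hc : ∀ x y, dist (f' x) (g' y) ≤ dist (f x) (g y) + η)
    (h : ∀ C, IsClosed C → μ.map f C ≤ ν.map g (cthickening ε C) + ENNReal.ofReal ε)
    {A : Set Z'} (hA : IsClosed A) :
    μ.map f' A ≤ ν.map g' (cthickening (ε + η) A) + ENNReal.ofReal (ε + η) := by
  -- Transport `A` back to `Z` as the closure of `f (f'⁻¹ A)`.
  have hB := h _ (isClosed_closure (s := f '' (f' ⁻¹' A)))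
  rw [Measure.map_apply hf isClosed_closure.measurableSet,
    Measure.map_apply hg isClosed_cthickening.measurableSet, cthickening_closure] at hB
  rw [Measure.map_apply hf' hA.measurableSet,
    Measure.map_apply hg' isClosed_cthickening.measurableSet]
  calc μ (f' ⁻¹' A) ≤ μ (f ⁻¹' closure (f '' (f' ⁻¹' A))) :=
        measure_mono fun x hx => subset_closure (mem_image_of_mem f hx)
    _ ≤ ν (g ⁻¹' cthickening ε (f '' (f' ⁻¹' A))) + ENNReal.ofReal ε := hB
    _ ≤ ν (g' ⁻¹' cthickening (ε + η) A) + ENNReal.ofReal (ε + η) := by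
        gcongr ν ?_ + ?_
        · exact (preimage_cthickening_image_subset hε hη hc _).trans
            (preimage_mono (cthickening_subset_of_subset _ (image_preimage_subset f' A)))
        · exact ENNReal.ofReal_le_ofReal (by linarith)

theorem prokhorovDist_map_le_of_dist_le (μ : Measure α) (ν : Measure β) [IsFiniteMeasure μ]
    [IsFiniteMeasure ν] (hf : Measurable f) (hg : Measurable g) (hf' : Measurable f')
    (hg' : Measurable g') (hη : 0 ≤ η) (hc : ∀ x y, dist (f' x) (g' y) ≤ dist (f x) (g y) + η) :
    prokhorovDist (μ.map f') (ν.map g') ≤ prokhorovDist (μ.map f) (ν.map g) + η := by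
  have hc' : ∀ y x, dist (g' y) (f' x) ≤ dist (g y) (f x) + η := fun y x => by
    simpa only [dist_comm] using hc x y
  rw [← sub_le_iff_le_add]
  refine le_csInf ?_ ?_
  · -- Any `ε` above both total masses is admissible.
    have hbound : ∀ (ρ : Measure Z) [IsFiniteMeasure ρ] (A : Set Z) {ε : ℝ}, ρ.real univ ≤ ε →
        ρ A ≤ ENNReal.ofReal ε := fun ρ _ A ε hε =>
      (measure_mono (subset_univ A)).trans <| by
        rw [← ofReal_measureReal]; exact ENNReal.ofReal_le_ofReal hε
    set ε := (μ.map f).real univ + (ν.map g).real univ + 1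
    refine ⟨ε, by positivity, fun A _ => ⟨le_add_left (hbound _ A ?_), le_add_left (hbound _ A ?_)⟩⟩
    all_goals linarith [measureReal_nonneg (μ := μ.map f) (s := univ),
      measureReal_nonneg (μ := ν.map g) (s := univ)]
  · rintro ε ⟨hε, hεA⟩
    rw [sub_le_iff_le_add]
    exact csInf_le ⟨0, fun _ h => h.1.le⟩ ⟨by positivity, fun A hA =>
      ⟨map_le_map_cthickening_add_of_dist_le μ ν hf hg hf' hg' hε.le hη hc
          (fun C hC => (hεA C hC).1) hA,
        map_le_map_cthickening_add_of_dist_le ν μ hg hf hg' hf' hε.le hη hc'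
          (fun C hC => (hεA C hC).2) hA⟩⟩

end Prokhorov

/-- A function `δ` on `α × β` that, together with the metrics of `α` and `β`, defines a
pseudometric on `α ⊕ β`. -/
structure IsCrossDist {α β : Type*} [PseudoMetricSpace α] [PseudoMetricSpace β]
    (δ : α × β → ℝ) : Prop where
  dist_le_left : ∀ x x' y, dist (δ (x, y)) (δ (x', y)) ≤ dist x x'
  dist_le_right : ∀ x y y', dist (δ (x, y)) (δ (x, y')) ≤ dist y y'
  dist_left_le_add : ∀ x x' y, dist x x' ≤ δ (x, y) + δ (x', y)
  dist_right_le_add : ∀ x y y', dist y y' ≤ δ (x, y) + δ (x, y')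

section CrossDist

variable {α β : Type*} [PseudoMetricSpace α] [PseudoMetricSpace β] {δ : α × β → ℝ}

theorem IsCrossDist.nonneg (h : IsCrossDist δ) (p : α × β) : 0 ≤ δ p := by
  have := h.dist_left_le_add p.1 p.1 p.2
  rw [dist_self] at this
  linarith

theorem IsCrossDist.lipschitzWith (h : IsCrossDist δ) : LipschitzWith 2 δ := by
  refine LipschitzWith.of_dist_le_mul fun p q => ?_
  calc dist (δ p) (δ q)
        ≤ dist (δ (p.1, p.2)) (δ (q.1, p.2)) + dist (δ (q.1, p.2)) (δ (q.1, q.2)) :=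
          dist_triangle _ _ _
    _ ≤ dist p.1 q.1 + dist p.2 q.2 := add_le_add (h.dist_le_left ..) (h.dist_le_right ..)
    _ ≤ 2 * dist p q := by
        rw [Prod.dist_eq]; linarith [le_max_left (dist p.1 q.1) (dist p.2 q.2),
          le_max_right (dist p.1 q.1) (dist p.2 q.2)]

theorem isClosed_setOf_isCrossDist : IsClosed {δ : α × β → ℝ | IsCrossDist δ} := by
  have : {δ : α × β → ℝ | IsCrossDist δ} =
      {δ | ∀ x x' y, dist (δ (x, y)) (δ (x', y)) ≤ dist x x'} ∩
      {δ | ∀ x y y', dist (δ (x, y)) (δ (x, y')) ≤ dist y y'} ∩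
      {δ | ∀ x x' y, dist x x' ≤ δ (x, y) + δ (x', y)} ∩
      {δ | ∀ x y y', dist y y' ≤ δ (x, y) + δ (x, y')} := by
    ext δ
    exact ⟨fun ⟨h₁, h₂, h₃, h₄⟩ => ⟨⟨⟨h₁, h₂⟩, h₃⟩, h₄⟩,
      fun ⟨⟨⟨h₁, h₂⟩, h₃⟩, h₄⟩ => ⟨h₁, h₂, h₃, h₄⟩⟩
  rw [this]
  simp only [ofPred_forall]
  refine ((isClosed_iInter fun x => isClosed_iInter fun x' => isClosed_iInter fun y => ?_).inter
    (isClosed_iInter fun x => isClosed_iInter fun y => isClosed_iInter fun y' => ?_)).inter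
    (isClosed_iInter fun x => isClosed_iInter fun x' => isClosed_iInter fun y => ?_) |>.inter
    (isClosed_iInter fun x => isClosed_iInter fun y => isClosed_iInter fun y' => ?_) <;>
  exact isClosed_le (by fun_prop) (by fun_prop)

theorem isCrossDist_dist_of_isometry {Z : Type*} [PseudoMetricSpace Z] {f : α → Z} {g : β → Z}
    (hf : Isometry f) (hg : Isometry g) : IsCrossDist fun p => dist (f p.1) (g p.2) where
  dist_le_left x x' _ := hf.dist_eq x x' ▸ dist_dist_dist_le_left _ _ _
  dist_le_right _ y y' := hg.dist_eq y y' ▸ dist_dist_dist_le_right _ _ _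
  dist_left_le_add x x' y := hf.dist_eq x x' ▸ dist_comm (f x') (g y) ▸ dist_triangle _ _ _
  dist_right_le_add x y y' := hg.dist_eq y y' ▸ dist_comm (f x) (g y) ▸ dist_triangle _ _ _

end CrossDist

namespace BoundedContinuousFunction

variable {γ : Type*} [TopologicalSpace γ]

theorem dist_eq_of_forall_dist_le {E : Type*} [PseudoMetricSpace E] {F G : γ →ᵇ E} {r : ℝ}
    (h : ∀ w, dist (F w) (G w) ≤ r) (w₀ : γ) (h₀ : dist (F w₀) (G w₀) = r) : dist F G = r :=
  le_antisymm ((dist_le (h₀ ▸ dist_nonneg)).2 h) (h₀ ▸ dist_coe_le_dist w₀)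

variable {α β : Type*} [PseudoMetricSpace α] [PseudoMetricSpace β] [CompactSpace α]
  [CompactSpace β] (δ : α × β →ᵇ ℝ)

def crossEmbLeft (x : α) : α ⊕ β →ᵇ ℝ :=
  mkOfCompact ⟨Sum.elim (dist x) fun y => δ (x, y), by fun_prop⟩

def crossEmbRight (y : β) : α ⊕ β →ᵇ ℝ :=
  mkOfCompact ⟨Sum.elim (fun x => δ (x, y)) (dist y), by fun_prop⟩

variable {δ}

theorem dist_crossEmbLeft (h : IsCrossDist ⇑δ) (x x' : α) :
    dist (crossEmbLeft δ x) (crossEmbLeft δ x') = dist x x' := by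
  refine dist_eq_of_forall_dist_le (fun w => ?_) (.inl x') (by simp [crossEmbLeft])
  rcases w with z | y
  · exact dist_dist_dist_le_left x x' z
  · exact h.dist_le_left x x' y

theorem dist_crossEmbRight (h : IsCrossDist ⇑δ) (y y' : β) :
    dist (crossEmbRight δ y) (crossEmbRight δ y') = dist y y' := by
  refine dist_eq_of_forall_dist_le (fun w => ?_) (.inr y') (by simp [crossEmbRight])
  rcases w with x | z
  · exact h.dist_le_right x y y'
  · exact dist_dist_dist_le_left y y' z

theorem dist_crossEmbLeft_crossEmbRight (h : IsCrossDist ⇑δ) (x : α) (y : β) :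
    dist (crossEmbLeft δ x) (crossEmbRight δ y) = δ (x, y) := by
  refine dist_eq_of_forall_dist_le (fun w => ?_) (.inr y)
    (by simp [crossEmbLeft, crossEmbRight, abs_of_nonneg (h.nonneg (x, y))])
  rcases w with x' | y'
  · have := abs_le.1 (Real.dist_eq _ _ ▸ h.dist_le_left x' x y)
    simp only [crossEmbLeft, crossEmbRight, mkOfCompact_apply, ContinuousMap.coe_mk,
      Sum.elim_inl, Real.dist_eq, abs_sub_le_iff]
    constructor <;> linarith [h.dist_left_le_add x x' y, dist_comm x x']
  · have := abs_le.1 (Real.dist_eq _ _ ▸ h.dist_le_right x y y')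
    simp only [crossEmbLeft, crossEmbRight, mkOfCompact_apply, ContinuousMap.coe_mk,
      Sum.elim_inr, Real.dist_eq, abs_sub_le_iff]
    constructor <;> linarith [h.dist_right_le_add x y y']

theorem isCompact_setOf_isCrossDist_le (M : ℝ) :
    IsCompact {δ : α × β →ᵇ ℝ | IsCrossDist ⇑δ ∧ ∀ p, δ p ≤ M} :=
  arzela_ascoli₂ (Icc 0 M) isCompact_Icc _
    ((isClosed_setOf_isCrossDist.preimage continuous_coe).inter
      (isClosed_le continuous_coe continuous_const))
    (fun _ p hδ => ⟨hδ.1.nonneg p, hδ.2 p⟩)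
    (LipschitzWith.uniformEquicontinuous _ 2 fun δ => δ.2.1.lipschitzWith).equicontinuous

end BoundedContinuousFunction

instance PMM.instNonempty (𝒳 : PMM) : Nonempty 𝒳.carrier := ⟨𝒳.basepoint⟩

namespace GHPEmbedding

open BoundedContinuousFunction

variable {𝒳 𝒴 : PMM}

theorem value_nonneg (e : GHPEmbedding 𝒳 𝒴) : 0 ≤ e.value :=
  dist_nonneg.trans (le_max_left _ _)

theorem dist_basepoint_le_value (e : GHPEmbedding 𝒳 𝒴) :
    dist (e.f 𝒳.basepoint) (e.g 𝒴.basepoint) ≤ e.value :=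
  le_max_left _ _

def sum (𝒳 𝒴 : PMM) : GHPEmbedding 𝒳 𝒴 where
  Z := 𝒳.carrier ⊕ 𝒴.carrier
  mZ := Metric.metricSpaceSum
  f := Sum.inl
  g := Sum.inr

theorem isIsometric_sum (𝒳 𝒴 : PMM) : (sum 𝒳 𝒴).IsIsometric :=
  ⟨Metric.isometry_inl, Metric.isometry_inr⟩

variable [CompactSpace 𝒳.carrier] [CompactSpace 𝒴.carrier]

theorem value_le_of_dist_le [IsFiniteMeasure 𝒳.meas] [IsFiniteMeasure 𝒴.meas]
    {e e' : GHPEmbedding 𝒳 𝒴} (he : e.IsIsometric) (he' : e'.IsIsometric) {η : ℝ} (hη : 0 ≤ η)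
    (hc : ∀ x y, dist (e'.f x) (e'.g y) ≤ dist (e.f x) (e.g y) + η) :
    e'.value ≤ e.value + η := by
  let := borel e.Z
  have : BorelSpace e.Z := ⟨rfl⟩
  let := borel e'.Z
  have : BorelSpace e'.Z := ⟨rfl⟩
  have hf := he.1.continuous
  have hg := he.2.continuous
  rw [value, value, ← max_add_add_right, ← max_add_add_right]
  exact max_le_max (hc _ _) <| max_le_max
    (hausdorffDist_range_le_of_dist_le (isCompact_range hf).isBounded
      (isCompact_range hg).isBounded hη hc)
    (prokhorovDist_map_le_of_dist_le _ _ hf.measurable hg.measurable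
      he'.1.continuous.measurable he'.2.continuous.measurable hη hc)

def ofCrossDist (δ : 𝒳.carrier × 𝒴.carrier →ᵇ ℝ) : GHPEmbedding 𝒳 𝒴 where
  Z := 𝒳.carrier ⊕ 𝒴.carrier →ᵇ ℝ
  mZ := inferInstance
  f := crossEmbLeft δ
  g := crossEmbRight δ

theorem isIsometric_ofCrossDist {δ : 𝒳.carrier × 𝒴.carrier →ᵇ ℝ} (h : IsCrossDist ⇑δ) :
    (ofCrossDist δ).IsIsometric :=
  ⟨.of_dist_eq (dist_crossEmbLeft h), .of_dist_eq (dist_crossEmbRight h)⟩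

theorem dist_ofCrossDist {δ : 𝒳.carrier × 𝒴.carrier →ᵇ ℝ} (h : IsCrossDist ⇑δ) (x : 𝒳.carrier)
    (y : 𝒴.carrier) : dist ((ofCrossDist δ).f x) ((ofCrossDist δ).g y) = δ (x, y) :=
  dist_crossEmbLeft_crossEmbRight h x y

theorem continuousOn_value_ofCrossDist [IsFiniteMeasure 𝒳.meas] [IsFiniteMeasure 𝒴.meas] :
    ContinuousOn (fun δ => (ofCrossDist δ).value)
      {δ : 𝒳.carrier × 𝒴.carrier →ᵇ ℝ | IsCrossDist ⇑δ} :=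
  (LipschitzOnWith.of_le_add fun δ hδ δ' hδ' =>
    value_le_of_dist_le (isIsometric_ofCrossDist hδ') (isIsometric_ofCrossDist hδ) dist_nonneg
      fun x y => by
        have := dist_coe_le_dist (f := δ) (g := δ') (x, y)
        rw [Real.dist_eq] at this
        rw [dist_ofCrossDist hδ, dist_ofCrossDist hδ']
        linarith [le_abs_self (δ (x, y) - δ' (x, y))]).continuousOn

def crossDist (e : GHPEmbedding 𝒳 𝒴) (he : e.IsIsometric) : 𝒳.carrier × 𝒴.carrier →ᵇ ℝ :=
  mkOfCompact ⟨fun p => dist (e.f p.1) (e.g p.2), by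
    have := he.1.continuous
    have := he.2.continuous
    fun_prop⟩

variable {e : GHPEmbedding 𝒳 𝒴}

theorem isCrossDist_crossDist (he : e.IsIsometric) : IsCrossDist ⇑(e.crossDist he) :=
  isCrossDist_dist_of_isometry he.1 he.2

theorem crossDist_le (he : e.IsIsometric) (p : 𝒳.carrier × 𝒴.carrier) :
    e.crossDist he p ≤ diam (univ : Set 𝒳.carrier) + e.value + diam (univ : Set 𝒴.carrier) := by
  have hx := dist_le_diam_of_mem isBounded_of_compactSpace (mem_univ p.1) (mem_univ 𝒳.basepoint)
  have hy := dist_le_diam_of_mem isBounded_of_compactSpace (mem_univ 𝒴.basepoint) (mem_univ p.2)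
  calc e.crossDist he p ≤ dist (e.f p.1) (e.f 𝒳.basepoint) +
        dist (e.f 𝒳.basepoint) (e.g 𝒴.basepoint) + dist (e.g 𝒴.basepoint) (e.g p.2) :=
        dist_triangle4 _ _ _ _
    _ ≤ _ := by
        rw [he.1.dist_eq, he.2.dist_eq]
        linarith [e.dist_basepoint_le_value]

theorem value_ofCrossDist_crossDist_le [IsFiniteMeasure 𝒳.meas] [IsFiniteMeasure 𝒴.meas]
    (he : e.IsIsometric) : (ofCrossDist (e.crossDist he)).value ≤ e.value := by
  simpa using value_le_of_dist_le he (isIsometric_ofCrossDist (isCrossDist_crossDist he)) le_rfl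
    fun x y => (dist_ofCrossDist (isCrossDist_crossDist he) x y).trans_le (by simp [crossDist])

/-- The cross-distances of isometric pairs of value at most that of `sum 𝒳 𝒴` lie in a compact
set on which the value is continuous; its minimiser beats every isometric pair. -/
theorem exists_value_ofCrossDist_le [IsFiniteMeasure 𝒳.meas] [IsFiniteMeasure 𝒴.meas] :
    ∃ δ₀ : 𝒳.carrier × 𝒴.carrier →ᵇ ℝ, IsCrossDist ⇑δ₀ ∧
      ∀ e : GHPEmbedding 𝒳 𝒴, e.IsIsometric → (ofCrossDist δ₀).value ≤ e.value := by
  set e₁ := sum 𝒳 𝒴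
  have he₁ := isIsometric_sum 𝒳 𝒴
  set M := diam (univ : Set 𝒳.carrier) + e₁.value + diam (univ : Set 𝒴.carrier)
  have mem : ∀ e (he : IsIsometric e), e.value ≤ e₁.value →
      e.crossDist he ∈ {δ : 𝒳.carrier × 𝒴.carrier →ᵇ ℝ | IsCrossDist ⇑δ ∧ ∀ p, δ p ≤ M} :=
    fun e he h =>
    ⟨isCrossDist_crossDist he, fun p => (crossDist_le he p).trans (by simp only [M]; linarith)⟩
  obtain ⟨δ₀, hδ₀, hmin⟩ := (isCompact_setOf_isCrossDist_le M).exists_isMinOn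
    ⟨_, mem e₁ he₁ le_rfl⟩ (continuousOn_value_ofCrossDist.mono fun _ h => h.1)
  refine ⟨δ₀, hδ₀.1, fun e he => ?_⟩
  rcases le_total e.value e₁.value with h | h
  · exact (hmin (mem e he h)).trans (value_ofCrossDist_crossDist_le he)
  · exact (hmin (mem e₁ he₁ le_rfl)).trans ((value_ofCrossDist_crossDist_le he₁).trans h)

end GHPEmbedding

/-- For compact pmm spaces, the infimum defining the Gromov-Hausdorff-Prokhorov distance is
attained: there are a metric space `Z` and isometric embeddings `f`, `g` of `𝒳`, `𝒴` into `Z`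
with `max(d(f o_X, g o_Y), dH(f(X), g(Y)), dP(f_*μ_X, g_*μ_Y)) = dc(𝒳,𝒴)`. -/
theorem cGHP_attained (𝒳 𝒴 : PMM) (h𝒳 : 𝒳.IsCompactPMM) (h𝒴 : 𝒴.IsCompactPMM) :
    ∃ e : GHPEmbedding 𝒳 𝒴, e.IsIsometric ∧ e.value = cGHP 𝒳 𝒴 := by
  have := h𝒳.1
  have := h𝒴.1
  have : IsFiniteMeasure 𝒳.meas := ⟨h𝒳.2.lt_top⟩
  have : IsFiniteMeasure 𝒴.meas := ⟨h𝒴.2.lt_top⟩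
  obtain ⟨δ₀, hδ₀, hmin⟩ := GHPEmbedding.exists_value_ofCrossDist_le (𝒳 := 𝒳) (𝒴 := 𝒴)
  have he₀ := GHPEmbedding.isIsometric_ofCrossDist hδ₀
  refine ⟨_, he₀, le_antisymm ?_ ?_⟩
  · exact le_csInf ⟨_, _, GHPEmbedding.isIsometric_sum 𝒳 𝒴, rfl⟩
      (by rintro _ ⟨e, he, rfl⟩; exact hmin e he)
  · exact csInf_le ⟨0, by rintro _ ⟨e, -, rfl⟩; exact e.value_nonneg⟩ ⟨_, he₀, rfl⟩
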